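/- Let p be a prime, H > 0, and let X = (X_n)_{n∈ℕ₀} be a dt-ss-si process with scaling function b(n) = (|n|_p)^H. Define a = sup{x ≥ 0 : P(|X₁| < x) = 0} and, in [0,∞], b = inf{x > 0 : P(|X₁| > x) = 0} (with b = ∞ if this set is empty). Then b ≥ (1 + 2·p^{−H})·a. -/

import Mathlib

open MeasureTheory ProbabilityTheory Filter Topology

noncomputable section

/-- The `p`-adic norm of a natural number, as a real number (`0` for `n = 0`). -/
def padicNormNat (p n : ℕ) : ℝ := ((padicNorm p (n : ℚ) : ℚ) : ℝ)

/-- Equality in distribution of two families of random variables: the laws of the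
induced maps into the product space coincide. -/
def EqDistFam {ι Ω₁ Ω₂ E : Type*} [MeasurableSpace Ω₁] [MeasurableSpace Ω₂]
    [MeasurableSpace E]
    (P₁ : Measure Ω₁) (P₂ : Measure Ω₂) (X : ι → Ω₁ → E) (Y : ι → Ω₂ → E) : Prop :=
  Measure.map (fun ω i => X i ω) P₁ = Measure.map (fun ω i => Y i ω) P₂

/-- A discrete-time process is self-similar with scaling function `b` if for every `n ≥ 1`,
`(X (n*m))ₘ ≐ (b n • X m)ₘ`. -/
def SelfSimilar {Ω : Type*} [MeasurableSpace Ω] (P : Measure Ω) (X : ℕ → Ω → ℝ)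
    (b : ℕ → ℝ) : Prop :=
  ∀ n : ℕ, 1 ≤ n → EqDistFam P P (fun m ω => X (n * m) ω) (fun m ω => b n * X m ω)

/-- A discrete-time process has stationary increments if for every `k ≥ 1`,
`(X (m+1) - X m)ₘ ≐ (X (m+k+1) - X (m+k))ₘ`. -/
def StationaryIncrements {Ω : Type*} [MeasurableSpace Ω] (P : Measure Ω)
    (X : ℕ → Ω → ℝ) : Prop :=
  ∀ k : ℕ, 1 ≤ k → EqDistFam P P (fun m ω => X (m + 1) ω - X m ω)
    (fun m ω => X (m + k + 1) ω - X (m + k) ω)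

/-!
Self-similarity with `b p = p^{-H} < 1` forces `X 0 = 0`, so by stationarity every increment
`X (m + k) - X m` has the law of `b k • X 1`, where `b k = (p^{-H})^{v_p(k)}`. Almost every path
therefore satisfies `b k * a ≤ |X (m + k) - X m| ≤ b k * c` for all `m` and `k ≥ 1`. Pick `n₀`
with `X n₀` within `p^{-H} a` of the supremum of such a path: then `X (n₀ + 1)`, `X (n₀ + p)` and
`X (n₀ + p + 1)` all lie below `X n₀`, at distances in `[a, c]`, `[p^{-H} a, p^{-H} c]` and
`[a, c]`, while `X (n₀ + p)` is at distance at least `a` from the other two, which are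
`p^{-H} a` apart. Whatever the order of these points, they force `c ≥ (1 + 2 p^{-H}) a`.
-/

def IncrementsBetween (b : ℕ → ℝ) (a c : ℝ) (s : ℕ → ℝ) : Prop :=
  ∀ m k : ℕ, 0 < k → b k * a ≤ |s (m + k) - s m| ∧ |s (m + k) - s m| ≤ b k * c

theorem one_add_two_mul_le_of_four_points {a c u A y₁ y₂ e : ℝ} (ha : 0 ≤ a) (hu : u ≤ 1)
    (hy₁ : y₁ ∈ Set.Icc (A - c) (A - a)) (hy₂ : y₂ ∈ Set.Icc (A - c) (A - a))
    (he : e ∈ Set.Icc (A - u * c) (A - u * a))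
    (hyy : u * a ≤ |y₂ - y₁|) (hey₁ : a ≤ |e - y₁|) (hey₂ : a ≤ |y₂ - e|) :
    (1 + 2 * u) * a ≤ c := by
  have hua : u * a ≤ a := mul_le_of_le_one_left ha hu
  obtain ⟨hy₁, hy₁'⟩ := hy₁
  obtain ⟨hy₂, hy₂'⟩ := hy₂
  obtain ⟨he, he'⟩ := he
  have huc : u * c ≤ c := mul_le_of_le_one_left (by linarith) hu
  rcases le_abs'.1 hyy with h | h <;> rcases le_abs'.1 hey₁ with h₁ | h₁ <;>
    rcases le_abs'.1 hey₂ with h₂ | h₂ <;> linarith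

namespace IncrementsBetween

variable {b : ℕ → ℝ} {a c : ℝ} {s : ℕ → ℝ}

theorem bounds (hs : IncrementsBetween b a c s) {m n : ℕ} (k : ℕ) (hk : 0 < k) (hn : m + k = n) :
    b k * a ≤ |s n - s m| ∧ |s n - s m| ≤ b k * c :=
  hn ▸ hs m k hk

theorem mem_Icc_of_lt_add (hs : IncrementsBetween b a c s) {m k : ℕ} (hk : 0 < k)
    (hlt : s (m + k) < s m + b k * a) :
    s (m + k) ∈ Set.Icc (s m - b k * c) (s m - b k * a) := by
  obtain ⟨hlo, hhi⟩ := hs m k hk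
  rcases le_abs'.1 hlo with h | h
  · exact ⟨by linarith [neg_abs_le (s (m + k) - s m)], by linarith⟩
  · linarith

theorem le_add_of_le_one (hs : IncrementsBetween b a c s) (hb : ∀ k, 0 < k → b k ≤ 1)
    (hc : 0 ≤ c) (n : ℕ) : s n ≤ s 0 + c := by
  rcases Nat.eq_zero_or_pos n with rfl | hn
  · linarith
  · have h := (hs.bounds n hn (zero_add n)).2
    have := mul_le_of_le_one_left hc (hb n hn)
    linarith [le_abs_self (s n - s 0)]

theorem one_add_two_mul_le {p : ℕ} (hp : 1 < p) {u : ℝ} (hu₀ : 0 < u) (hu₁ : u ≤ 1)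
    (hb : ∀ k, 0 < k → b k = u ^ padicValNat p k) (ha : 0 < a)
    (hs : IncrementsBetween b a c s) : (1 + 2 * u) * a ≤ c := by
  have hb₁ : b 1 = 1 := by rw [hb 1 one_pos, padicValNat_one_right, pow_zero]
  have hbp : b p = u := by rw [hb p (by omega), padicValNat.self hp, pow_one]
  have hb_pred : b (p - 1) = 1 := by
    rw [hb _ (by omega), padicValNat.eq_zero_of_not_dvd (Nat.not_dvd_of_pos_of_lt
      (by omega) (by omega)), pow_zero]
  have hb_succ : b (p + 1) = 1 := by
    have : ¬p ∣ p + 1 := fun h => by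
      have := Nat.le_of_dvd one_pos ((Nat.dvd_add_right dvd_rfl).1 h); omega
    rw [hb _ (by omega), padicValNat.eq_zero_of_not_dvd this, pow_zero]
  have hc : 0 ≤ c := by
    have := hs 0 1 one_pos
    rw [hb₁, one_mul, one_mul] at this
    linarith [this.1.trans this.2]
  have hbdd : BddAbove (Set.range s) :=
    ⟨s 0 + c, Set.forall_mem_range.2 (hs.le_add_of_le_one
      (fun k hk => hb k hk ▸ pow_le_one₀ hu₀.le hu₁) hc)⟩
  obtain ⟨n₀, hn₀⟩ := exists_lt_of_lt_ciSup (sub_lt_self (⨆ n, s n) (mul_pos hu₀ ha))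
  have htop : ∀ k, s (n₀ + k) < s n₀ + u * a := fun k => by
    linarith [le_ciSup hbdd (n₀ + k)]
  have hua : u * a ≤ a := mul_le_of_le_one_left ha.le hu₁
  have hy₁ := hs.mem_Icc_of_lt_add one_pos (by rw [hb₁, one_mul]; linarith [htop 1])
  have hy₂ := hs.mem_Icc_of_lt_add (m := n₀) (k := p + 1) (by omega)
    (by rw [hb_succ, one_mul]; linarith [htop (p + 1)])
  have he := hs.mem_Icc_of_lt_add (m := n₀) (k := p) (by omega) (by rw [hbp]; exact htop p)
  rw [hb₁, one_mul, one_mul] at hy₁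
  rw [hb_succ, one_mul, one_mul] at hy₂
  rw [hbp] at he
  refine one_add_two_mul_le_of_four_points ha.le hu₁ hy₁ hy₂ he ?_ ?_ ?_
  · simpa [hbp] using (hs.bounds (m := n₀ + 1) p (by omega) (by omega)).1
  · simpa [hb_pred] using (hs.bounds (m := n₀ + 1) (p - 1) (by omega) (by omega)).1
  · simpa [hb₁] using (hs.bounds (m := n₀ + p) 1 one_pos (by omega)).1

end IncrementsBetween

theorem padicNormNat_rpow (p : ℕ) {k : ℕ} (hk : k ≠ 0) (H : ℝ) :
    padicNormNat p k ^ H = ((p : ℝ) ^ (-H)) ^ padicValNat p k := by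
  have hp₀ : (0 : ℝ) ≤ p := Nat.cast_nonneg p
  have hnorm : padicNormNat p k = ((p : ℝ) ^ padicValNat p k)⁻¹ := by
    rw [padicNormNat, padicNorm.eq_zpow_of_nonzero (by exact_mod_cast hk), padicValRat.of_nat,
      zpow_neg, zpow_natCast]
    push_cast
    rfl
  rw [hnorm, Real.inv_rpow (by positivity), ← Real.rpow_natCast, ← Real.rpow_mul hp₀,
    ← Real.rpow_mul_natCast hp₀, neg_mul, Real.rpow_neg hp₀, mul_comm]

theorem EqDistFam.identDistrib {ι Ω₁ Ω₂ E : Type*} [MeasurableSpace Ω₁] [MeasurableSpace Ω₂]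
    [MeasurableSpace E] {P₁ : Measure Ω₁} {P₂ : Measure Ω₂} {X : ι → Ω₁ → E} {Y : ι → Ω₂ → E}
    (h : EqDistFam P₁ P₂ X Y) (hX : ∀ i, Measurable (X i)) (hY : ∀ i, Measurable (Y i)) :
    IdentDistrib (fun ω i => X i ω) (fun ω i => Y i ω) P₁ P₂ :=
  ⟨(measurable_pi_lambda _ hX).aemeasurable, (measurable_pi_lambda _ hY).aemeasurable, h⟩

theorem ae_eq_zero_of_identDistrib_const_mul {Ω : Type*} [MeasurableSpace Ω] {μ : Measure Ω}
    [IsFiniteMeasure μ] {f : Ω → ℝ} (hf : Measurable f) {r : ℝ} (hr : |r| < 1)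
    (h : IdentDistrib f (fun ω => r * f ω) μ μ) : f =ᵐ[μ] 0 := by
  have hpow : ∀ n : ℕ, IdentDistrib f (fun ω => r ^ n * f ω) μ μ := by
    intro n
    induction n with
    | zero => simpa using IdentDistrib.refl hf.aemeasurable
    | succ n ih => simpa [pow_succ, mul_assoc] using ih.trans (h.const_mul (r ^ n))
  -- `μ {t < |f|} = μ {t < |r ^ n * f|}`, and the latter sets shrink to `∅`
  have htail : ∀ t > 0, μ {ω | t < |f ω|} = 0 := by
    intro t ht
    have hlim : Tendsto (fun n : ℕ => μ {ω | t < |r ^ n * f ω|}) atTop (𝓝 (μ ∅)) := by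
      refine tendsto_measure_of_tendsto_indicator_of_isFiniteMeasure atTop μ
        (fun n => measurableSet_lt measurable_const (hf.const_mul _).abs) fun ω => ?_
      have h0 := ((tendsto_pow_atTop_nhds_zero_of_abs_lt_one hr).mul_const (f ω)).abs
      rw [zero_mul, abs_zero] at h0
      filter_upwards [h0.eventually (gt_mem_nhds ht)] with n hn
      simpa using hn.le
    have hconst : ∀ n : ℕ, μ {ω | t < |r ^ n * f ω|} = μ {ω | t < |f ω|} := fun n =>
      ((hpow n).measure_mem_eq (measurableSet_lt measurable_const measurable_abs)).symm
    simp only [hconst, measure_empty] at hlim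
    exact tendsto_nhds_unique tendsto_const_nhds hlim
  have hcover : {ω | f ω ≠ 0} ⊆ ⋃ n : ℕ, {ω | 1 / ((n : ℝ) + 1) < |f ω|} := fun ω hω =>
    Set.mem_iUnion.2 (exists_nat_one_div_lt (abs_pos.2 hω))
  exact measure_mono_null hcover (measure_iUnion_null fun n => htail _ Nat.one_div_pos_of_nat)

section

variable {Ω : Type*} [MeasurableSpace Ω] {P : Measure Ω} {X : ℕ → Ω → ℝ} {b : ℕ → ℝ}

theorem SelfSimilar.ae_eq_zero [IsFiniteMeasure P] (hss : SelfSimilar P X b)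
    (hX : ∀ n, Measurable (X n)) {n : ℕ} (hn : 1 ≤ n) (hbn : |b n| < 1) : X 0 =ᵐ[P] 0 := by
  refine ae_eq_zero_of_identDistrib_const_mul (hX 0) hbn ?_
  have h := (hss n hn).identDistrib (fun m => hX _) fun m => (hX m).const_mul _
  simpa [Function.comp_def] using h.comp (measurable_pi_apply 0)

theorem StationaryIncrements.identDistrib_increment (hsi : StationaryIncrements P X)
    (hX : ∀ n, Measurable (X n)) (m k : ℕ) :
    IdentDistrib (fun ω => X (m + k) ω - X m ω) (fun ω => X k ω - X 0 ω) P P := by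
  rcases Nat.eq_zero_or_pos m with rfl | hm
  · simp only [zero_add]
    exact IdentDistrib.refl ((hX k).sub (hX 0)).aemeasurable
  have h := ((hsi m hm).identDistrib (fun j => (hX _).sub (hX _))
    fun j => (hX _).sub (hX _)).comp (Finset.measurable_sum (Finset.range k)
      fun j _ => measurable_pi_apply (X := fun _ : ℕ => ℝ) j)
  convert h.symm using 1 <;> funext ω <;> simp only [Function.comp_apply]
  · have := Finset.sum_range_sub (fun j => X (j + m) ω) k
    simp only [Nat.add_right_comm _ 1 m] at this
    rw [this, zero_add, add_comm]
  · exact (Finset.sum_range_sub (fun j => X j ω) k).symm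

theorem SelfSimilar.identDistrib_increment (hss : SelfSimilar P X b)
    (hX : ∀ n, Measurable (X n)) (hsi : StationaryIncrements P X) (hX₀ : X 0 =ᵐ[P] 0)
    (m : ℕ) {k : ℕ} (hk : 0 < k) :
    IdentDistrib (fun ω => X (m + k) ω - X m ω) (fun ω => b k * X 1 ω) P P := by
  have hscale :
      IdentDistrib (fun ω => X k ω - X 0 ω) (fun ω => b k * X 1 ω - b k * X 0 ω) P P := by
    have h := (hss k hk).identDistrib (fun m => hX _) fun m => (hX m).const_mul _
    simpa [Function.comp_def] using h.comp ((measurable_pi_apply 1).sub (measurable_pi_apply 0))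
  refine (hsi.identDistrib_increment hX m k).trans (hscale.trans
    (IdentDistrib.of_ae_eq (((hX 1).const_mul _).sub ((hX 0).const_mul _)).aemeasurable ?_))
  filter_upwards [hX₀] with ω hω
  simp [hω]

theorem SelfSimilar.ae_incrementsBetween (hss : SelfSimilar P X b)
    (hX : ∀ n, Measurable (X n)) (hsi : StationaryIncrements P X) (hX₀ : X 0 =ᵐ[P] 0)
    (hb : ∀ k, 0 ≤ b k) {a c : ℝ} (ha : ∀ᵐ ω ∂P, a ≤ |X 1 ω|) (hc : ∀ᵐ ω ∂P, |X 1 ω| ≤ c) :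
    ∀ᵐ ω ∂P, IncrementsBetween b a c (fun n => X n ω) := by
  simp only [IncrementsBetween, ae_all_iff]
  intro m k hk
  have hmeas : MeasurableSet {x : ℝ | b k * a ≤ |x| ∧ |x| ≤ b k * c} :=
    (measurableSet_le measurable_const measurable_abs).inter
      (measurableSet_le measurable_abs measurable_const)
  refine (hss.identDistrib_increment hX hsi hX₀ m hk).symm.ae_snd hmeas ?_
  filter_upwards [ha, hc] with ω hωa hωc
  rw [abs_mul, abs_of_nonneg (hb k)]
  exact ⟨mul_le_mul_of_nonneg_left hωa (hb k), mul_le_mul_of_nonneg_left hωc (hb k)⟩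

end

theorem one_add_two_mul_le_of_padic_selfSimilar {Ω : Type*} [MeasurableSpace Ω] {P : Measure Ω}
    [IsProbabilityMeasure P] {X : ℕ → Ω → ℝ} (hX : ∀ n, Measurable (X n)) {p : ℕ}
    (hp : 1 < p) {H : ℝ} (hH : 0 < H) (hss : SelfSimilar P X (fun n => padicNormNat p n ^ H))
    (hsi : StationaryIncrements P X) {a c : ℝ} (ha : 0 < a)
    (hlow : P {ω | |X 1 ω| < a} = 0) (hup : P {ω | c < |X 1 ω|} = 0) :
    (1 + 2 * (p : ℝ) ^ (-H)) * a ≤ c := by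
  set u := (p : ℝ) ^ (-H)
  have hu₀ : 0 < u := Real.rpow_pos_of_pos (by positivity) _
  have hu₁ : u < 1 := Real.rpow_lt_one_of_one_lt_of_neg (by exact_mod_cast hp) (by linarith)
  have hb : ∀ k, 0 < k → padicNormNat p k ^ H = u ^ padicValNat p k := fun k hk =>
    padicNormNat_rpow p hk.ne' H
  have hX₀ : X 0 =ᵐ[P] 0 := hss.ae_eq_zero hX (n := p) (by omega) (by
    rw [hb p (by omega), padicValNat.self hp, pow_one, abs_of_pos hu₀]
    exact hu₁)
  obtain ⟨ω, hω⟩ := (hss.ae_incrementsBetween hX hsi hX₀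
    (fun k => Real.rpow_nonneg (Rat.cast_nonneg.2 (padicNorm.nonneg _)) H)
    (measure_eq_zero_iff_ae_notMem.1 hlow |>.mono fun ω h => not_lt.1 h)
    (measure_eq_zero_iff_ae_notMem.1 hup |>.mono fun ω h => not_lt.1 h)).exists
  exact hω.one_add_two_mul_le hp hu₀ hu₁.le hb ha

/-- Proposition 2.6 (6): with `a` the essential lower bound and `B` the essential upper
bound (in `ℝ≥0∞`) of `|X 1|`, one has `B ≥ (1 + 2 p^{-H}) a`. -/
theorem stmt12 {Ω : Type*} [MeasurableSpace Ω] (P : Measure Ω) [IsProbabilityMeasure P]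
    (X : ℕ → Ω → ℝ) (hXmeas : ∀ n, Measurable (X n))
    (p : ℕ) (hp : p.Prime) (H : ℝ) (hH : 0 < H)
    (hss : SelfSimilar P X (fun n => (padicNormNat p n) ^ H))
    (hsi : StationaryIncrements P X)
    (a : ℝ) (ha : a = sSup {x : ℝ | 0 ≤ x ∧ P {ω | |X 1 ω| < x} = 0})
    (B : ENNReal)
    (hB : B = sInf ((fun x : ℝ => ENNReal.ofReal x) ''
      {x : ℝ | 0 < x ∧ P {ω | x < |X 1 ω|} = 0})) :
    ENNReal.ofReal ((1 + 2 * (p : ℝ) ^ (-H)) * a) ≤ B := by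
  rw [hB]
  refine le_sInf ?_
  rintro _ ⟨c, ⟨hc₀, hc⟩, rfl⟩
  refine ENNReal.ofReal_le_ofReal ?_
  have hκ : 0 < 1 + 2 * (p : ℝ) ^ (-H) := by positivity
  rw [← le_div_iff₀' hκ]
  refine le_of_forall_lt_imp_le_of_dense fun t ht => ?_
  rcases le_or_gt t 0 with ht₀ | ht₀
  · exact ht₀.trans (div_nonneg hc₀.le hκ.le)
  have hne : {x : ℝ | 0 ≤ x ∧ P {ω | |X 1 ω| < x} = 0}.Nonempty :=
    ⟨0, le_rfl, by simp only [(abs_nonneg _).not_gt, Set.ofPred_false, measure_empty]⟩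
  obtain ⟨x, ⟨-, hx⟩, htx⟩ := exists_lt_of_lt_csSup hne (ha ▸ ht)
  rw [le_div_iff₀' hκ]
  exact one_add_two_mul_le_of_padic_selfSimilar hXmeas hp.one_lt hH hss hsi ht₀
    (measure_mono_null (fun ω hω => lt_trans hω htx) hx) hc
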